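/- arXiv:1905.11675 — 6 statements merged into one kernel-verified Lean document; each statement's English description precedes it below -/
import Mathlib

section
/- Assume ‖x_i‖₂ ≤ 1 for all i and that K is positive definite with least eigenvalue λ₀ > 0. There exists a constant c > 0, depending only on ℓ, such that if M ≥ c n² log(2n/δ)/λ₀², then with probability at least 1 − δ/2 over the random initialization of W₀ (i.i.d. N(0,1) entries), the least eigenvalue of the Gram matrix satisfies λ_min(G_{W₀}) ≥ (3/4) λ₀. -/
open Matrix MeasureTheory ProbabilityTheory
open scoped ENNReal

/-- Euclidean norm of a real vector. -/
noncomputable def eNorm {n : Type*} [Fintype n] (v : n → ℝ) : ℝ :=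
  Real.sqrt (∑ i, v i ^ 2)

/-- The Gram matrix of the neural tangent kernel of the two-layer network at parameter `W`:
`(G_W)_{ij} = (1/M) ∑_r x_iᵀx_j σ'(w_r·x_i) σ'(w_r·x_j)`. -/
noncomputable def gramNTK (M d n : ℕ) (σ' : ℝ → ℝ) (x : Fin n → Fin d → ℝ)
    (W : Fin M → Fin d → ℝ) : Matrix (Fin n) (Fin n) ℝ :=
  Matrix.of fun i j => (M : ℝ)⁻¹ * ∑ r, (x i ⬝ᵥ x j) * σ' (W r ⬝ᵥ x i) * σ' (W r ⬝ᵥ x j)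

/-- The NTK limit kernel matrix `K_{ij} = E_{w∼N(0,I_d)}[x_iᵀx_j σ'(w·x_i)σ'(w·x_j)]`. -/
noncomputable def ntkKernel (d n : ℕ) (σ' : ℝ → ℝ) (x : Fin n → Fin d → ℝ) :
    Matrix (Fin n) (Fin n) ℝ :=
  Matrix.of fun i j =>
    ∫ w : Fin d → ℝ, (x i ⬝ᵥ x j) * σ' (w ⬝ᵥ x i) * σ' (w ⬝ᵥ x j)
      ∂(Measure.pi fun _ : Fin d => gaussianReal 0 1)

/-- i.i.d. standard Gaussian initialization of the first-layer weights. -/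
noncomputable def gaussInit (M d : ℕ) : Measure (Fin M → Fin d → ℝ) :=
  Measure.pi fun _ => Measure.pi fun _ => gaussianReal 0 1

/-!
Each entry `(G_W)_{ij}` is the sample mean, over the `M` i.i.d. Gaussian rows of `W`, of the
random feature `x_iᵀx_j σ'(w·x_i) σ'(w·x_j)`, which is bounded by `ℓ²` and has Gaussian mean
`K_{ij}`. Hoeffding's inequality and a union bound over the `n²` entries show that, once `M`
exceeds `c n² log(2n/δ) / λ₀²`, with probability at least `1 - δ/2` every entry of `G_W - K` is
at most `ε = λ₀/(4n)` in absolute value. An entrywise perturbation of size `ε` moves the quadratic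
form `vᵀ G v` by at most `ε n ‖v‖² = λ₀ ‖v‖² / 4`, so `vᵀ G v ≥ (3/4) λ₀ ‖v‖²`.
-/

open Real

namespace ProbabilityTheory

theorem HasSubgaussianMGF.measure_le_abs_le {Ω : Type*} [MeasurableSpace Ω] {μ : Measure Ω}
    [IsFiniteMeasure μ] {X : Ω → ℝ} {c : NNReal} (hX : HasSubgaussianMGF X c μ) {t : ℝ}
    (ht : 0 ≤ t) :
    μ {ω | t ≤ |X ω|} ≤ ENNReal.ofReal (2 * exp (-t ^ 2 / (2 * c))) := by
  have hsplit : {ω | t ≤ |X ω|} = {ω | t ≤ X ω} ∪ {ω | t ≤ (-X) ω} := by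
    ext ω; simp [le_abs]
  have tail {Y : Ω → ℝ} (hY : HasSubgaussianMGF Y c μ) :
      μ {ω | t ≤ Y ω} ≤ ENNReal.ofReal (exp (-t ^ 2 / (2 * c))) := by
    rw [← ofReal_measureReal]
    exact ENNReal.ofReal_le_ofReal (hY.measure_ge_le ht)
  calc μ {ω | t ≤ |X ω|} ≤ μ {ω | t ≤ X ω} + μ {ω | t ≤ (-X) ω} :=
        hsplit ▸ measure_union_le _ _
    _ ≤ _ := by
      rw [two_mul, ENNReal.ofReal_add (by positivity) (by positivity)]
      exact add_le_add (tail hX) (tail hX.neg)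

theorem measure_le_abs_sampleMean_sub_integral_le {E : Type*} [MeasurableSpace E]
    (μ : Measure E) [IsProbabilityMeasure μ] {ι : Type*} [Fintype ι] {f : E → ℝ}
    (hf : Measurable f) {B : ℝ} (hfB : ∀ y, |f y| ≤ B) {ε : ℝ} (hε : 0 ≤ ε) :
    (Measure.pi fun _ : ι => μ)
        {w | ε ≤ |(Fintype.card ι : ℝ)⁻¹ * ∑ r, f (w r) - ∫ y, f y ∂μ|}
      ≤ ENNReal.ofReal (2 * exp (-Fintype.card ι * ε ^ 2 / (2 * B ^ 2))) := by
  rcases isEmpty_or_nonempty ι with hι | hι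
  · exact prob_le_one.trans (by simp)
  set N : ℝ := (Fintype.card ι : ℝ)
  have hN : 0 < N := by positivity
  have hcentered : HasSubgaussianMGF (fun y => f y - ∫ y, f y ∂μ) (‖B‖₊ ^ 2) μ := by
    have h := hasSubgaussianMGF_of_mem_Icc (μ := μ) hf.aemeasurable
      (Filter.Eventually.of_forall fun y => abs_le.1 (hfB y))
    rwa [sub_neg_eq_add, ← two_mul, nnnorm_mul, Real.nnnorm_two,
      mul_div_cancel_left₀ _ two_ne_zero] at h
  have hsum : HasSubgaussianMGF (fun w : ι → E => ∑ r, (f (w r) - ∫ y, f y ∂μ))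
      (∑ _r : ι, ‖B‖₊ ^ 2) (Measure.pi fun _ : ι => μ) :=
    HasSubgaussianMGF.sum_of_iIndepFun
      (iIndepFun_pi fun _ => (hf.sub_const _).aemeasurable)
      fun r _ => HasSubgaussianMGF.of_map (measurable_pi_apply r).aemeasurable
        (by rwa [(measurePreserving_eval (fun _ : ι => μ) r).map_eq])
  have hset : {w : ι → E | ε ≤ |N⁻¹ * ∑ r, f (w r) - ∫ y, f y ∂μ|}
      = {w | N * ε ≤ |∑ r, (f (w r) - ∫ y, f y ∂μ)|} := by
    ext w
    rw [Set.mem_ofPred_eq, Set.mem_ofPred_eq, Finset.sum_sub_distrib, Finset.sum_const,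
      Finset.card_univ, nsmul_eq_mul, ← mul_le_mul_iff_of_pos_left hN, ← abs_of_pos hN,
      ← abs_mul, abs_of_pos hN, mul_sub, mul_inv_cancel_left₀ hN.ne']
  rw [hset]
  convert hsum.measure_le_abs_le (t := N * ε) (by positivity) using 4
  push_cast [Finset.sum_const, Finset.card_univ, nsmul_eq_mul, coe_nnnorm, Real.norm_eq_abs,
    sq_abs]
  field_simp
  ring

end ProbabilityTheory

namespace MeasureTheory

theorem ofReal_one_sub_le_measure_of_measure_compl_le {Ω : Type*} [MeasurableSpace Ω]
    {μ : Measure Ω} [IsProbabilityMeasure μ] {s : Set Ω} {p : ℝ} (hp : 0 ≤ p)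
    (hs : μ sᶜ ≤ ENNReal.ofReal p) :
    ENNReal.ofReal (1 - p) ≤ μ s := by
  rw [ENNReal.ofReal_sub _ hp, ENNReal.ofReal_one, tsub_le_iff_right, ← measure_univ (μ := μ)]
  exact (measure_univ_le_add_compl s).trans (add_le_add le_rfl hs)

end MeasureTheory

theorem abs_dotProduct_le_eNorm_mul_eNorm {n : Type*} [Fintype n] (u v : n → ℝ) :
    |u ⬝ᵥ v| ≤ eNorm u * eNorm v := by
  rw [eNorm, eNorm, ← Real.sqrt_mul (Finset.sum_nonneg fun i _ => sq_nonneg (u i))]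
  exact Real.abs_le_sqrt (Finset.sum_mul_sq_le_sq_mul_sq _ u v)

theorem Matrix.dotProduct_mulVec_le_add_of_abs_sub_le {n : Type*} [Fintype n]
    {A K : Matrix n n ℝ} {ε : ℝ} (h : ∀ i j, |A i j - K i j| ≤ ε) (v : n → ℝ) :
    v ⬝ᵥ K *ᵥ v ≤ v ⬝ᵥ A *ᵥ v + ε * Fintype.card n * ∑ i, v i ^ 2 := by
  rcases isEmpty_or_nonempty n with hn | ⟨⟨i₀⟩⟩
  · simp [dotProduct]
  have hε : 0 ≤ ε := (abs_nonneg _).trans (h i₀ i₀)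
  rw [← sub_le_iff_le_add', ← dotProduct_sub, ← sub_mulVec, mul_assoc]
  calc v ⬝ᵥ (K - A) *ᵥ v = ∑ i, ∑ j, v i * (K i j - A i j) * v j := by
        simp only [dotProduct, mulVec, Matrix.sub_apply, Finset.mul_sum, mul_assoc]
    _ ≤ ∑ i, ∑ j, |v i| * ε * |v j| := by
        refine Finset.sum_le_sum fun i _ => Finset.sum_le_sum fun j _ => ?_
        refine (le_abs_self _).trans ?_
        rw [abs_mul, abs_mul, abs_sub_comm]
        gcongr
        exact h i j
    _ = ε * (∑ i, |v i|) ^ 2 := by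
        rw [sq, Finset.sum_mul_sum, Finset.mul_sum]
        simp only [Finset.mul_sum]
        exact Finset.sum_congr rfl fun i _ => Finset.sum_congr rfl fun j _ => by ring
    _ ≤ ε * (Fintype.card n * ∑ i, v i ^ 2) := by
        gcongr
        simpa only [sq_abs, Finset.card_univ] using
          sq_sum_le_card_mul_sum_sq (s := Finset.univ) (f := fun i => |v i|)

theorem sq_mul_two_mul_exp_le_half {n : ℕ} {M B lam δ : ℝ} (hB : B ≠ 0) (hlam : 0 < lam)
    (hδ0 : 0 < δ) (hδ1 : δ ≤ 1) (hM : 64 * B ^ 2 * n ^ 2 * log (2 * n / δ) / lam ^ 2 ≤ M) :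
    n ^ 2 * (2 * exp (-M * (lam / (4 * n)) ^ 2 / (2 * B ^ 2))) ≤ δ / 2 := by
  rcases n.eq_zero_or_pos with rfl | hn
  · rw [Nat.cast_zero, zero_pow two_ne_zero, zero_mul]; positivity
  have hn : (0 : ℝ) < n := by exact_mod_cast hn
  set L := log (2 * n / δ)
  have hexponent : 2 * L ≤ M * (lam / (4 * n)) ^ 2 / (2 * B ^ 2) := by
    rw [div_le_iff₀ (by positivity)] at hM
    rw [le_div_iff₀ (by positivity)]
    calc 2 * L * (2 * B ^ 2) = 64 * B ^ 2 * n ^ 2 * L / (4 * n) ^ 2 := by field_simp; ring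
      _ ≤ M * lam ^ 2 / (4 * n) ^ 2 := by gcongr
      _ = M * (lam / (4 * n)) ^ 2 := by ring
  have hexp : exp (-M * (lam / (4 * n)) ^ 2 / (2 * B ^ 2)) ≤ (δ / (2 * n)) ^ 2 := by
    calc exp (-M * (lam / (4 * n)) ^ 2 / (2 * B ^ 2)) ≤ exp (-L) ^ 2 := by
          rw [← exp_nat_mul, exp_le_exp, neg_mul, neg_div]
          push_cast
          linarith
      _ = (δ / (2 * n)) ^ 2 := by rw [exp_neg, exp_log (by positivity), inv_div]
  calc (n : ℝ) ^ 2 * (2 * exp (-M * (lam / (4 * n)) ^ 2 / (2 * B ^ 2)))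
      ≤ n ^ 2 * (2 * (δ / (2 * n)) ^ 2) := by gcongr
    _ = δ * δ / 2 := by field_simp
    _ ≤ δ / 2 := by gcongr; exact mul_le_of_le_one_right hδ0.le hδ1

/-- `(G_W)_{ij}` is the sample mean of this feature over the rows of `W`, and `K_{ij}` is its
Gaussian mean. -/
noncomputable def ntkFeature {d n : ℕ} (σ' : ℝ → ℝ) (x : Fin n → Fin d → ℝ) (i j : Fin n)
    (w : Fin d → ℝ) : ℝ :=
  (x i ⬝ᵥ x j) * σ' (w ⬝ᵥ x i) * σ' (w ⬝ᵥ x j)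

theorem abs_ntkFeature_le {d n : ℕ} {σ' : ℝ → ℝ} {ℓ : ℝ} (hσ' : ∀ t, |σ' t| ≤ ℓ)
    {x : Fin n → Fin d → ℝ} (hx : ∀ i, eNorm (x i) ≤ 1) (i j : Fin n) (w : Fin d → ℝ) :
    |ntkFeature σ' x i j w| ≤ ℓ ^ 2 := by
  have hdot : |x i ⬝ᵥ x j| ≤ 1 :=
    (abs_dotProduct_le_eNorm_mul_eNorm _ _).trans
      (mul_le_one₀ (hx i) (by unfold eNorm; positivity) (hx j))
  have hℓ : 0 ≤ ℓ := (abs_nonneg _).trans (hσ' 0)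
  calc |ntkFeature σ' x i j w| = |x i ⬝ᵥ x j| * |σ' (w ⬝ᵥ x i)| * |σ' (w ⬝ᵥ x j)| := by
        rw [ntkFeature, abs_mul, abs_mul]
    _ ≤ 1 * ℓ * ℓ := by gcongr <;> apply_assumption
    _ = ℓ ^ 2 := by ring

instance isProbabilityMeasure_gaussInit (M d : ℕ) : IsProbabilityMeasure (gaussInit M d) := by
  unfold gaussInit; infer_instance

theorem gaussInit_le_abs_gramNTK_sub_ntkKernel_le {M d n : ℕ} {σ' : ℝ → ℝ}
    (hσ' : Measurable σ') {x : Fin n → Fin d → ℝ} {i j : Fin n} {B : ℝ}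
    (hB : ∀ w, |ntkFeature σ' x i j w| ≤ B) {ε : ℝ} (hε : 0 ≤ ε) :
    gaussInit M d {W | ε ≤ |gramNTK M d n σ' x W i j - ntkKernel d n σ' x i j|}
      ≤ ENNReal.ofReal (2 * exp (-M * ε ^ 2 / (2 * B ^ 2))) := by
  have h := measure_le_abs_sampleMean_sub_integral_le
    (Measure.pi fun _ : Fin d => gaussianReal 0 1) (ι := Fin M) (f := ntkFeature σ' x i j)
    (by unfold ntkFeature; fun_prop) hB hε
  rwa [Fintype.card_fin] at h

theorem gaussInit_exists_le_abs_gramNTK_sub_ntkKernel_le {M d n : ℕ} {σ' : ℝ → ℝ}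
    (hσ' : Measurable σ') {x : Fin n → Fin d → ℝ} {B : ℝ}
    (hB : ∀ i j w, |ntkFeature σ' x i j w| ≤ B) {ε : ℝ} (hε : 0 ≤ ε) :
    gaussInit M d {W | ∃ i j, ε ≤ |gramNTK M d n σ' x W i j - ntkKernel d n σ' x i j|}
      ≤ ENNReal.ofReal (n ^ 2 * (2 * exp (-M * ε ^ 2 / (2 * B ^ 2)))) := by
  have hunion : {W | ∃ i j, ε ≤ |gramNTK M d n σ' x W i j - ntkKernel d n σ' x i j|}
      = ⋃ p : Fin n × Fin n,
        {W | ε ≤ |gramNTK M d n σ' x W p.1 p.2 - ntkKernel d n σ' x p.1 p.2|} := by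
    ext W; simp
  calc gaussInit M d _
      ≤ ∑ p : Fin n × Fin n, gaussInit M d
        {W | ε ≤ |gramNTK M d n σ' x W p.1 p.2 - ntkKernel d n σ' x p.1 p.2|} :=
        hunion ▸ measure_iUnion_fintype_le _ _
    _ ≤ ∑ _p : Fin n × Fin n, ENNReal.ofReal (2 * exp (-M * ε ^ 2 / (2 * B ^ 2))) :=
        Finset.sum_le_sum fun p _ =>
          gaussInit_le_abs_gramNTK_sub_ntkKernel_le hσ' (hB p.1 p.2) hε
    _ = ENNReal.ofReal (n ^ 2 * (2 * exp (-M * ε ^ 2 / (2 * B ^ 2)))) := by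
        rw [Finset.sum_const, Finset.card_univ, Fintype.card_prod, Fintype.card_fin,
          nsmul_eq_mul, ← ENNReal.ofReal_natCast, ← ENNReal.ofReal_mul (by positivity)]
        push_cast
        rw [← sq]

/-- If `‖x_i‖₂ ≤ 1` for all `i` and the NTK limit kernel `K` is positive
definite with least eigenvalue `λ₀ > 0`, then there is a constant `c > 0` depending only on
the derivative bound `ℓ` such that if `M ≥ c n² log(2n/δ)/λ₀²`, with probability at least
`1 − δ/2` over the Gaussian initialization `W₀`, `λ_min(G_{W₀}) ≥ (3/4) λ₀`. -/
theorem gram_least_eigenvalue_at_init (ℓ : ℝ) :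
    ∃ c : ℝ, 0 < c ∧
      ∀ (M d n : ℕ) (σ σ' : ℝ → ℝ),
        (∀ t : ℝ, HasDerivAt σ (σ' t) t) →
        (∀ t : ℝ, |σ' t| ≤ ℓ) →
        ∀ x : Fin n → Fin d → ℝ, (∀ i, eNorm (x i) ≤ 1) →
        ∀ lam₀ : ℝ, 0 < lam₀ →
          (∀ v : Fin n → ℝ,
            lam₀ * ∑ i, v i ^ 2 ≤ v ⬝ᵥ (ntkKernel d n σ' x).mulVec v) →
        ∀ δ : ℝ, 0 < δ → δ < 1 →
          c * n ^ 2 * Real.log (2 * n / δ) / lam₀ ^ 2 ≤ (M : ℝ) →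
          ENNReal.ofReal (1 - δ / 2) ≤
            gaussInit M d
              {W | ∀ v : Fin n → ℝ,
                (3 / 4 : ℝ) * lam₀ * ∑ i, v i ^ 2 ≤
                  v ⬝ᵥ (gramNTK M d n σ' x W).mulVec v} := by
  -- `ℓ ^ 2 + 1` rather than `ℓ ^ 2`: at `ℓ = 0` the Hoeffding exponent would divide by zero
  refine ⟨64 * (ℓ ^ 2 + 1) ^ 2, by positivity, ?_⟩
  intro M d n σ σ' hσ hσ' x hx lam₀ hlam₀ hK δ hδ0 hδ1 hM
  have hσ'_meas : Measurable σ' := funext (fun t => (hσ t).deriv) ▸ measurable_deriv σ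
  set ε := lam₀ / (4 * n)
  have hbad : gaussInit M d
      {W | ∃ i j, ε ≤ |gramNTK M d n σ' x W i j - ntkKernel d n σ' x i j|}
      ≤ ENNReal.ofReal (δ / 2) :=
    (gaussInit_exists_le_abs_gramNTK_sub_ntkKernel_le hσ'_meas (B := ℓ ^ 2 + 1)
      (fun i j w => (abs_ntkFeature_le hσ' hx i j w).trans (by linarith)) (by positivity)).trans
      (ENNReal.ofReal_le_ofReal
        (sq_mul_two_mul_exp_le_half (by positivity) hlam₀ hδ0 hδ1.le (by linarith)))
  refine (ofReal_one_sub_le_measure_of_measure_compl_le (by positivity)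
    (s := {W | ∀ i j, |gramNTK M d n σ' x W i j - ntkKernel d n σ' x i j| < ε})
    (by simpa only [Set.compl_ofPred, not_forall, not_lt] using hbad)).trans
    (measure_mono fun W hW v => ?_)
  have hεn : ε * n ≤ lam₀ / 4 := by
    rcases n.eq_zero_or_pos with rfl | hn
    · rw [Nat.cast_zero, mul_zero]; positivity
    · rw [div_mul_eq_mul_div, div_le_div_iff₀ (by positivity) (by norm_num)]; nlinarith
  have hperturb := Matrix.dotProduct_mulVec_le_add_of_abs_sub_le (fun i j => (hW i j).le) v
  rw [Fintype.card_fin] at hperturb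
  nlinarith [hK v, Finset.sum_nonneg fun i (_ : i ∈ Finset.univ) => sq_nonneg (v i)]
end

section
/- For any W₁, W₂ ∈ ℝ^{M×d}, any a ∈ {−1,1}^M, and any x ∈ ℝ^d, the gradients J_{W,x} = ∂f(W,x)/∂W satisfy ‖J_{W₁,x} − J_{W₂,x}‖_F ≤ (β ‖x‖₂² / √M) ‖W₁ − W₂‖_F. -/
open Matrix

/-- Frobenius norm of a real matrix. -/
noncomputable def frobNorm {m n : Type*} [Fintype m] [Fintype n] (A : Matrix m n ℝ) : ℝ :=
  Real.sqrt (∑ i, ∑ j, A i j ^ 2)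

/-- For the two-layer network with differentiable `β`-smooth activation
(`σ'` is `β`-Lipschitz), the gradients `J_{W,x} = (1/√M)(σ'(Wx) ∘ a) xᵀ` satisfy
`‖J_{W₁,x} − J_{W₂,x}‖_F ≤ (β ‖x‖₂² / √M) ‖W₁ − W₂‖_F`. -/
theorem jacobian_lipschitz_in_W {M d : ℕ} (σ σ' : ℝ → ℝ)
    (hderiv : ∀ t : ℝ, HasDerivAt σ (σ' t) t)
    (β : ℝ) (hsmooth : ∀ s t : ℝ, |σ' s - σ' t| ≤ β * |s - t|)
    (a : Fin M → ℝ) (ha : ∀ r, a r = 1 ∨ a r = -1)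
    (W₁ W₂ : Matrix (Fin M) (Fin d) ℝ) (x : Fin d → ℝ)
    (J₁ J₂ : Matrix (Fin M) (Fin d) ℝ)
    (hJ₁ : J₁ = Matrix.of fun r j => (Real.sqrt M)⁻¹ * (σ' (W₁ r ⬝ᵥ x) * a r) * x j)
    (hJ₂ : J₂ = Matrix.of fun r j => (Real.sqrt M)⁻¹ * (σ' (W₂ r ⬝ᵥ x) * a r) * x j) :
    frobNorm (J₁ - J₂) ≤ (β * eNorm x ^ 2 / Real.sqrt M) * frobNorm (W₁ - W₂) := by
  have hβ : 0 ≤ β := by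
    have h := hsmooth 0 1
    have h0 : (0:ℝ) ≤ |σ' 0 - σ' 1| := abs_nonneg _
    simp only [zero_sub, abs_neg, abs_one, mul_one] at h
    linarith
  set X : ℝ := ∑ j, x j ^ 2 with hX
  have hXnn : 0 ≤ X := Finset.sum_nonneg fun _ _ => sq_nonneg _
  have hxX : eNorm x ^ 2 = X := Real.sq_sqrt hXnn
  set c : ℝ := β * eNorm x ^ 2 / Real.sqrt M with hc
  have hc0 : 0 ≤ c := by
    apply div_nonneg _ (Real.sqrt_nonneg _)
    exact mul_nonneg hβ (by rw [hxX]; exact hXnn)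
  set T : ℝ := ∑ i, ∑ j, (W₁ - W₂) i j ^ 2 with hT
  have hTnn : 0 ≤ T := Finset.sum_nonneg fun _ _ =>
    Finset.sum_nonneg fun _ _ => sq_nonneg _
  have key : ∑ i, ∑ j, (J₁ - J₂) i j ^ 2 ≤ c ^ 2 * T := by
    have hc2 : c ^ 2 = ((Real.sqrt M)⁻¹) ^ 2 * β ^ 2 * X ^ 2 := by
      rw [hc, hxX, div_pow, mul_pow, div_eq_mul_inv, ← inv_pow]
      ring
    rw [hT, Finset.mul_sum]
    apply Finset.sum_le_sum
    intro r _
    have ha2 : a r ^ 2 = 1 := by rcases ha r with h | h <;> rw [h] <;> ring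
    have hrow : ∑ j, (J₁ - J₂) r j ^ 2
        = ((Real.sqrt M)⁻¹) ^ 2 * (σ' (W₁ r ⬝ᵥ x) - σ' (W₂ r ⬝ᵥ x)) ^ 2 * X := by
      rw [hX, Finset.mul_sum]
      apply Finset.sum_congr rfl
      intro j _
      have : (J₁ - J₂) r j = (Real.sqrt M)⁻¹ * ((σ' (W₁ r ⬝ᵥ x) - σ' (W₂ r ⬝ᵥ x)) * a r) * x j := by
        simp [hJ₁, hJ₂, Matrix.sub_apply]
        ring
      rw [this]
      have : ((Real.sqrt M)⁻¹ * ((σ' (W₁ r ⬝ᵥ x) - σ' (W₂ r ⬝ᵥ x)) * a r) * x j) ^ 2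
          = ((Real.sqrt M)⁻¹) ^ 2 * (σ' (W₁ r ⬝ᵥ x) - σ' (W₂ r ⬝ᵥ x)) ^ 2 * (a r ^ 2) * x j ^ 2 := by
        ring
      rw [this, ha2]
      ring
    rw [hrow]
    have hΔ : (σ' (W₁ r ⬝ᵥ x) - σ' (W₂ r ⬝ᵥ x)) ^ 2 ≤ β ^ 2 * ((W₁ - W₂) r ⬝ᵥ x) ^ 2 := by
      have h1 := hsmooth (W₁ r ⬝ᵥ x) (W₂ r ⬝ᵥ x)
      have h2 : |σ' (W₁ r ⬝ᵥ x) - σ' (W₂ r ⬝ᵥ x)| ^ 2 ≤ (β * |W₁ r ⬝ᵥ x - W₂ r ⬝ᵥ x|) ^ 2 :=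
        pow_le_pow_left₀ (abs_nonneg _) h1 2
      have h3 : W₁ r ⬝ᵥ x - W₂ r ⬝ᵥ x = (W₁ - W₂) r ⬝ᵥ x := by
        simp [Matrix.sub_apply, dotProduct, Finset.sum_sub_distrib, sub_mul]
      rw [sq_abs, mul_pow, sq_abs, h3] at h2
      exact h2
    have hCS : ((W₁ - W₂) r ⬝ᵥ x) ^ 2 ≤ (∑ j, (W₁ - W₂) r j ^ 2) * X := by
      rw [hX]
      exact Finset.sum_mul_sq_le_sq_mul_sq _ _ _
    calc ((Real.sqrt M)⁻¹) ^ 2 * (σ' (W₁ r ⬝ᵥ x) - σ' (W₂ r ⬝ᵥ x)) ^ 2 * X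
        ≤ ((Real.sqrt M)⁻¹) ^ 2 * (β ^ 2 * ((∑ j, (W₁ - W₂) r j ^ 2) * X)) * X := by
          apply mul_le_mul_of_nonneg_right _ hXnn
          apply mul_le_mul_of_nonneg_left _ (sq_nonneg _)
          exact le_trans hΔ (mul_le_mul_of_nonneg_left hCS (sq_nonneg _))
      _ = c ^ 2 * ∑ j, (W₁ - W₂) r j ^ 2 := by rw [hc2]; ring
  have lhs : frobNorm (J₁ - J₂) = Real.sqrt (∑ i, ∑ j, (J₁ - J₂) i j ^ 2) := rfl
  have rhs : c * frobNorm (W₁ - W₂) = Real.sqrt (c ^ 2 * T) := by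
    rw [frobNorm, ← hT, Real.sqrt_mul (sq_nonneg c), Real.sqrt_sq hc0]
  rw [lhs, rhs]
  exact Real.sqrt_le_sqrt key
end

section
/- For any W₁, W₂ ∈ ℝ^{M×d}, any a ∈ {−1,1}^M, and data points x_1, …, x_n ∈ ℝ^d with ‖x_i‖₂ ≤ C_x, the stacked Jacobian matrices satisfy ‖𝐉_{W₁} − 𝐉_{W₂}‖₂ ≤ ‖𝐉_{W₁} − 𝐉_{W₂}‖_F ≤ β C_x² √(n/M) ‖W₁ − W₂‖_F. -/
open Matrix

/-- Spectral (ℓ²-operator) norm of a real matrix. -/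
noncomputable def specNorm {m n : Type*} [Fintype m] [Fintype n] [DecidableEq n]
    (A : Matrix m n ℝ) : ℝ :=
  ‖LinearMap.toContinuousLinearMap (Matrix.toEuclideanLin A)‖

/-! Because `a_r² = 1`, the squared Frobenius norm of `𝐉_{W₁} − 𝐉_{W₂}` is
`M⁻¹ Σ_{i,r} (σ'(w₁_r·x_i) − σ'(w₂_r·x_i))² ‖x_i‖²`. β-smoothness and Cauchy–Schwarz bound each
term by `β² ‖w₁_r − w₂_r‖² ‖x_i‖⁴ ≤ β² C_x⁴ ‖w₁_r − w₂_r‖²`, and summing over `i` and `r` gives the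
bound. The spectral norm is at most the Frobenius norm by Cauchy–Schwarz on each row. -/

section Norms

variable {m n : Type*} [Fintype m] [Fintype n]

lemma eNorm_nonneg (v : n → ℝ) : 0 ≤ eNorm v := Real.sqrt_nonneg _

lemma eNorm_sq (v : n → ℝ) : eNorm v ^ 2 = ∑ i, v i ^ 2 :=
  Real.sq_sqrt (by positivity)

lemma frobNorm_nonneg (A : Matrix m n ℝ) : 0 ≤ frobNorm A := Real.sqrt_nonneg _

lemma frobNorm_sq_eq_sum_eNorm_sq (A : Matrix m n ℝ) :
    frobNorm A ^ 2 = ∑ i, eNorm (A i) ^ 2 := by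
  simp only [frobNorm, eNorm_sq]
  exact Real.sq_sqrt (by positivity)

lemma sq_dotProduct_le (v w : n → ℝ) : (v ⬝ᵥ w) ^ 2 ≤ eNorm v ^ 2 * eNorm w ^ 2 := by
  rw [eNorm_sq, eNorm_sq]
  exact Finset.sum_mul_sq_le_sq_mul_sq _ _ _

lemma specNorm_le_frobNorm [DecidableEq n] (A : Matrix m n ℝ) : specNorm A ≤ frobNorm A := by
  refine ContinuousLinearMap.opNorm_le_bound _ (frobNorm_nonneg A) fun v => ?_
  have hv : eNorm v.ofLp = ‖v‖ := by simp [eNorm, EuclideanSpace.norm_eq]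
  refine le_of_pow_le_pow_left₀ two_ne_zero (mul_nonneg (frobNorm_nonneg A) (norm_nonneg v)) ?_
  calc ‖toEuclideanLin A v‖ ^ 2 = ∑ i, (A i ⬝ᵥ v.ofLp) ^ 2 := by
        simp [EuclideanSpace.norm_sq_eq, mulVec]
    _ ≤ ∑ i, eNorm (A i) ^ 2 * ‖v‖ ^ 2 :=
        Finset.sum_le_sum fun i _ => hv ▸ sq_dotProduct_le (A i) v.ofLp
    _ = (frobNorm A * ‖v‖) ^ 2 := by
        rw [mul_pow, frobNorm_sq_eq_sum_eNorm_sq, Finset.sum_mul]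

end Norms

lemma sq_sub_le_of_abs_sub_le {f : ℝ → ℝ} {β : ℝ} (hf : ∀ s t, |f s - f t| ≤ β * |s - t|)
    (s t : ℝ) : (f s - f t) ^ 2 ≤ β ^ 2 * (s - t) ^ 2 := by
  calc (f s - f t) ^ 2 = |f s - f t| ^ 2 := (sq_abs _).symm
    _ ≤ (β * |s - t|) ^ 2 := pow_le_pow_left₀ (abs_nonneg _) (hf s t) 2
    _ = β ^ 2 * (s - t) ^ 2 := by rw [mul_pow, sq_abs]

lemma sq_sub_comp_dotProduct_le {ι : Type*} [Fintype ι] {f : ℝ → ℝ} {β : ℝ}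
    (hf : ∀ s t, |f s - f t| ≤ β * |s - t|) (w₁ w₂ v : ι → ℝ) :
    (f (w₁ ⬝ᵥ v) - f (w₂ ⬝ᵥ v)) ^ 2 ≤ β ^ 2 * eNorm (w₁ - w₂) ^ 2 * eNorm v ^ 2 := by
  calc (f (w₁ ⬝ᵥ v) - f (w₂ ⬝ᵥ v)) ^ 2 ≤ β ^ 2 * ((w₁ - w₂) ⬝ᵥ v) ^ 2 := by
        rw [sub_dotProduct]
        exact sq_sub_le_of_abs_sub_le hf _ _
    _ ≤ β ^ 2 * (eNorm (w₁ - w₂) ^ 2 * eNorm v ^ 2) :=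
        mul_le_mul_of_nonneg_left (sq_dotProduct_le _ _) (sq_nonneg β)
    _ = β ^ 2 * eNorm (w₁ - w₂) ^ 2 * eNorm v ^ 2 := by ring

section StackedJacobian

variable {M d n : ℕ}

/-- Row `i` is `vec(J_{W,x_i})`, with `J_{W,x}` the `M × d` matrix `M^{-1/2} a_r σ'(w_r·x) x`. -/
noncomputable def stackedJacobian (σ' : ℝ → ℝ) (a : Fin M → ℝ) (x : Fin n → Fin d → ℝ)
    (W : Matrix (Fin M) (Fin d) ℝ) : Matrix (Fin n) (Fin M × Fin d) ℝ :=
  Matrix.of fun i rj => (Real.sqrt M)⁻¹ * (σ' (W rj.1 ⬝ᵥ x i) * a rj.1) * x i rj.2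

lemma frobNorm_stackedJacobian_sub_sq (σ' : ℝ → ℝ) {a : Fin M → ℝ} (ha : ∀ r, a r ^ 2 = 1)
    (x : Fin n → Fin d → ℝ) (W₁ W₂ : Matrix (Fin M) (Fin d) ℝ) :
    frobNorm (stackedJacobian σ' a x W₁ - stackedJacobian σ' a x W₂) ^ 2 =
      (M : ℝ)⁻¹ * ∑ i, ∑ r, (σ' (W₁ r ⬝ᵥ x i) - σ' (W₂ r ⬝ᵥ x i)) ^ 2 * eNorm (x i) ^ 2 := by
  have hM : (Real.sqrt M)⁻¹ ^ 2 = (M : ℝ)⁻¹ := by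
    rw [inv_pow, Real.sq_sqrt (Nat.cast_nonneg M)]
  rw [frobNorm, Real.sq_sqrt (by positivity), Finset.mul_sum]
  refine Finset.sum_congr rfl fun i _ => ?_
  simp only [Fintype.sum_prod_type, eNorm_sq, Finset.mul_sum]
  refine Finset.sum_congr rfl fun r _ => Finset.sum_congr rfl fun j _ => ?_
  simp only [stackedJacobian, Matrix.sub_apply, Matrix.of_apply]
  linear_combination (σ' (W₁ r ⬝ᵥ x i) - σ' (W₂ r ⬝ᵥ x i)) ^ 2 * x i j ^ 2 *
    ((Real.sqrt M)⁻¹ ^ 2 * ha r + hM)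

lemma frobNorm_stackedJacobian_sub_sq_le {σ' : ℝ → ℝ} {β : ℝ}
    (hσ' : ∀ s t, |σ' s - σ' t| ≤ β * |s - t|) {a : Fin M → ℝ} (ha : ∀ r, a r ^ 2 = 1)
    {x : Fin n → Fin d → ℝ} {Cx : ℝ} (hx : ∀ i, eNorm (x i) ≤ Cx)
    (W₁ W₂ : Matrix (Fin M) (Fin d) ℝ) :
    frobNorm (stackedJacobian σ' a x W₁ - stackedJacobian σ' a x W₂) ^ 2 ≤
      β ^ 2 * Cx ^ 4 * (n / M) * frobNorm (W₁ - W₂) ^ 2 := by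
  have hx4 : ∀ i, eNorm (x i) ^ 4 ≤ Cx ^ 4 := fun i =>
    pow_le_pow_left₀ (eNorm_nonneg _) (hx i) 4
  have hterm : ∀ i r, (σ' (W₁ r ⬝ᵥ x i) - σ' (W₂ r ⬝ᵥ x i)) ^ 2 * eNorm (x i) ^ 2 ≤
      β ^ 2 * Cx ^ 4 * eNorm ((W₁ - W₂) r) ^ 2 := fun i r =>
    calc (σ' (W₁ r ⬝ᵥ x i) - σ' (W₂ r ⬝ᵥ x i)) ^ 2 * eNorm (x i) ^ 2
        ≤ β ^ 2 * eNorm ((W₁ - W₂) r) ^ 2 * eNorm (x i) ^ 2 * eNorm (x i) ^ 2 :=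
          mul_le_mul_of_nonneg_right (sq_sub_comp_dotProduct_le hσ' _ _ _) (sq_nonneg _)
      _ = β ^ 2 * eNorm ((W₁ - W₂) r) ^ 2 * eNorm (x i) ^ 4 := by ring
      _ ≤ β ^ 2 * eNorm ((W₁ - W₂) r) ^ 2 * Cx ^ 4 :=
          mul_le_mul_of_nonneg_left (hx4 i) (by positivity)
      _ = β ^ 2 * Cx ^ 4 * eNorm ((W₁ - W₂) r) ^ 2 := by ring
  calc frobNorm (stackedJacobian σ' a x W₁ - stackedJacobian σ' a x W₂) ^ 2
      = (M : ℝ)⁻¹ * ∑ i, ∑ r, (σ' (W₁ r ⬝ᵥ x i) - σ' (W₂ r ⬝ᵥ x i)) ^ 2 * eNorm (x i) ^ 2 :=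
        frobNorm_stackedJacobian_sub_sq σ' ha x W₁ W₂
    _ ≤ (M : ℝ)⁻¹ * ∑ _i : Fin n, ∑ r, β ^ 2 * Cx ^ 4 * eNorm ((W₁ - W₂) r) ^ 2 :=
        mul_le_mul_of_nonneg_left
          (Finset.sum_le_sum fun i _ => Finset.sum_le_sum fun r _ => hterm i r) (by positivity)
    _ = β ^ 2 * Cx ^ 4 * (n / M) * frobNorm (W₁ - W₂) ^ 2 := by
        rw [frobNorm_sq_eq_sum_eNorm_sq, Finset.sum_const, Finset.card_univ, Fintype.card_fin,
          nsmul_eq_mul, ← Finset.mul_sum]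
        ring

end StackedJacobian

theorem stacked_jacobian_lipschitz_general {M d n : ℕ} (σ' : ℝ → ℝ)
    (β : ℝ) (hsmooth : ∀ s t : ℝ, |σ' s - σ' t| ≤ β * |s - t|)
    (a : Fin M → ℝ) (ha : ∀ r, a r = 1 ∨ a r = -1)
    (x : Fin n → Fin d → ℝ) (Cx : ℝ) (hx : ∀ i, eNorm (x i) ≤ Cx)
    (W₁ W₂ : Matrix (Fin M) (Fin d) ℝ)
    (Jmat₁ Jmat₂ : Matrix (Fin n) (Fin M × Fin d) ℝ)
    (hJmat₁ : Jmat₁ = Matrix.of fun i rj =>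
      (Real.sqrt M)⁻¹ * (σ' (W₁ rj.1 ⬝ᵥ x i) * a rj.1) * x i rj.2)
    (hJmat₂ : Jmat₂ = Matrix.of fun i rj =>
      (Real.sqrt M)⁻¹ * (σ' (W₂ rj.1 ⬝ᵥ x i) * a rj.1) * x i rj.2) :
    specNorm (Jmat₁ - Jmat₂) ≤ frobNorm (Jmat₁ - Jmat₂) ∧
    frobNorm (Jmat₁ - Jmat₂) ≤ β * Cx ^ 2 * Real.sqrt (n / M) * frobNorm (W₁ - W₂) := by
  change Jmat₁ = stackedJacobian σ' a x W₁ at hJmat₁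
  change Jmat₂ = stackedJacobian σ' a x W₂ at hJmat₂
  subst hJmat₁ hJmat₂
  refine ⟨specNorm_le_frobNorm _, ?_⟩
  have hβ : 0 ≤ β := (abs_nonneg _).trans (by simpa using hsmooth 1 0)
  have ha2 : ∀ r, a r ^ 2 = 1 := fun r => by rcases ha r with h | h <;> simp [h]
  refine le_of_pow_le_pow_left₀ two_ne_zero (by have := frobNorm_nonneg (W₁ - W₂); positivity) ?_
  calc _ ≤ β ^ 2 * Cx ^ 4 * (n / M) * frobNorm (W₁ - W₂) ^ 2 :=
        frobNorm_stackedJacobian_sub_sq_le hsmooth ha2 hx W₁ W₂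
    _ = (β * Cx ^ 2 * Real.sqrt (n / M) * frobNorm (W₁ - W₂)) ^ 2 := by
        rw [mul_pow, mul_pow, mul_pow, Real.sq_sqrt (by positivity)]
        ring

/-- For the two-layer network with `β`-smooth activation, the stacked
Jacobians `𝐉_W ∈ ℝ^{n×Md}` (row `i` being `vec(J_{W,x_i})ᵀ`) satisfy
`‖𝐉_{W₁} − 𝐉_{W₂}‖₂ ≤ ‖𝐉_{W₁} − 𝐉_{W₂}‖_F ≤ β C_x² √(n/M) ‖W₁ − W₂‖_F`. -/
theorem stacked_jacobian_lipschitz {M d n : ℕ} (σ σ' : ℝ → ℝ)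
    (hderiv : ∀ t : ℝ, HasDerivAt σ (σ' t) t)
    (β : ℝ) (hsmooth : ∀ s t : ℝ, |σ' s - σ' t| ≤ β * |s - t|)
    (a : Fin M → ℝ) (ha : ∀ r, a r = 1 ∨ a r = -1)
    (x : Fin n → Fin d → ℝ) (Cx : ℝ) (hx : ∀ i, eNorm (x i) ≤ Cx)
    (W₁ W₂ : Matrix (Fin M) (Fin d) ℝ)
    (Jmat₁ Jmat₂ : Matrix (Fin n) (Fin M × Fin d) ℝ)
    (hJmat₁ : Jmat₁ = Matrix.of fun i rj =>
      (Real.sqrt M)⁻¹ * (σ' (W₁ rj.1 ⬝ᵥ x i) * a rj.1) * x i rj.2)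
    (hJmat₂ : Jmat₂ = Matrix.of fun i rj =>
      (Real.sqrt M)⁻¹ * (σ' (W₂ rj.1 ⬝ᵥ x i) * a rj.1) * x i rj.2) :
    specNorm (Jmat₁ - Jmat₂) ≤ frobNorm (Jmat₁ - Jmat₂) ∧
    frobNorm (Jmat₁ - Jmat₂) ≤ β * Cx ^ 2 * Real.sqrt (n / M) * frobNorm (W₁ - W₂) :=
  stacked_jacobian_lipschitz_general σ' β hsmooth a ha x Cx hx W₁ W₂ Jmat₁ Jmat₂ hJmat₁ hJmat₂
end

section
/- Let F : ℝ^p → ℝⁿ be continuously differentiable with Jacobian J(w) ∈ ℝ^{n×p}, and let y ∈ ℝⁿ. Fix w ∈ ℝ^p such that G = J(w) J(w)^T is invertible, and set w' = w − J(w)^T G^{-1} (F(w) − y). Then F(w') − y = (J(w) − J̄) J(w)^T G^{-1} (F(w) − y), where J̄ = ∫₀¹ J(w + s(w' − w)) ds. In particular, ‖F(w') − y‖₂ ≤ ‖J(w) − J̄‖₂ ‖J(w)^T‖₂ ‖G^{-1}‖₂ ‖F(w) − y‖₂. -/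
open Matrix

/-! By the fundamental theorem of calculus on the segment `[w, w']`, `F w' - F w = J̄ (w' - w)`.
Since `J(w) J(w)ᵀ G⁻¹ = 1`, the step `u = w - w'` satisfies `J(w) u = F w - y`, hence
`F w' - y = J(w) u - J̄ u`. The bound is submultiplicativity of the operator norm. -/

theorem eNorm_eq_norm_toLp {n : Type*} [Fintype n] (v : n → ℝ) :
    eNorm v = ‖WithLp.toLp 2 v‖ := by
  simp [eNorm, EuclideanSpace.norm_eq, sq_abs]

theorem specNorm_nonneg {m n : Type*} [Fintype m] [Fintype n] [DecidableEq n]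
    (A : Matrix m n ℝ) : 0 ≤ specNorm A :=
  norm_nonneg _

theorem eNorm_mulVec_le {m n : Type*} [Fintype m] [Fintype n] [DecidableEq n]
    (A : Matrix m n ℝ) (v : n → ℝ) : eNorm (A *ᵥ v) ≤ specNorm A * eNorm v := by
  rw [eNorm_eq_norm_toLp, eNorm_eq_norm_toLp]
  exact (LinearMap.toContinuousLinearMap (toEuclideanLin A)).le_opNorm (WithLp.toLp 2 v)

theorem mulVec_transpose_mulVec_inv_mulVec {m n : Type*} [Fintype m] [Fintype n]
    [DecidableEq m] (A : Matrix m n ℝ) (hA : IsUnit (A * Aᵀ)) (r : m → ℝ) :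
    A *ᵥ (Aᵀ *ᵥ ((A * Aᵀ)⁻¹ *ᵥ r)) = r := by
  rw [mulVec_mulVec, mulVec_mulVec,
    mul_nonsing_inv _ ((isUnit_iff_isUnit_det _).mp hA), one_mulVec]

theorem mulVec_intervalIntegral_apply {m n : Type*} [Fintype n] (M : ℝ → Matrix m n ℝ)
    {a b : ℝ} (hM : ∀ i j, IntervalIntegrable (fun s => M s i j) MeasureTheory.volume a b)
    (v : n → ℝ) (i : m) :
    ((of fun i j => ∫ s in a..b, M s i j) *ᵥ v) i = ∫ s in a..b, (M s *ᵥ v) i := by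
  simp only [mulVec, dotProduct, of_apply]
  rw [intervalIntegral.integral_finsetSum fun j _ => (hM i j).mul_const (v j)]
  simp only [intervalIntegral.integral_mul_const]

section Jacobian

variable {ι κ : Type*} [Fintype ι] [Fintype κ]
  {F : (ι → ℝ) → κ → ℝ} {J : (ι → ℝ) → Matrix κ ι ℝ}

theorem continuous_of_fderiv_eq_mulVec [DecidableEq ι] (hF : ContDiff ℝ 1 F)
    (hJ : ∀ w v, fderiv ℝ F w v = J w *ᵥ v) : Continuous J := by
  have hentry : ∀ i j, (fun u => J u i j) = fun u => fderiv ℝ F u (Pi.single j 1) i :=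
    fun i j => funext fun u => by simp [hJ, mulVec_single]
  refine continuous_pi fun i => continuous_pi fun j => ?_
  rw [hentry]
  fun_prop

theorem hasDerivAt_comp_add_smul (hF : Differentiable ℝ F)
    (hJ : ∀ w v, fderiv ℝ F w v = J w *ᵥ v) (w d : ι → ℝ) (s : ℝ) :
    HasDerivAt (fun t : ℝ => F (w + t • d)) (J (w + s • d) *ᵥ d) s := by
  have hline : HasDerivAt (fun t : ℝ => w + t • d) d s := by
    simpa using ((hasDerivAt_id s).smul_const d).const_add w
  rw [← hJ]
  exact (hF _).hasFDerivAt.comp_hasDerivAt s hline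

noncomputable def segmentAverage (J : (ι → ℝ) → Matrix κ ι ℝ) (w w' : ι → ℝ) :
    Matrix κ ι ℝ :=
  of fun i j => ∫ s in (0 : ℝ)..1, J (w + s • (w' - w)) i j

theorem sub_eq_segmentAverage_mulVec [DecidableEq ι] (hF : ContDiff ℝ 1 F)
    (hJ : ∀ w v, fderiv ℝ F w v = J w *ᵥ v) (w w' : ι → ℝ) :
    F w' - F w = segmentAverage J w w' *ᵥ (w' - w) := by
  have hJc : Continuous fun s : ℝ => J (w + s • (w' - w)) :=
    (continuous_of_fderiv_eq_mulVec hF hJ).comp (by fun_prop)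
  have hentry : ∀ i j, IntervalIntegrable (fun s => J (w + s • (w' - w)) i j)
      MeasureTheory.volume 0 1 := fun i j =>
    ((continuous_apply_apply i j).comp hJc).intervalIntegrable 0 1
  funext i
  rw [segmentAverage, mulVec_intervalIntegral_apply _ hentry]
  have hderiv : ∀ s, HasDerivAt (fun t : ℝ => F (w + t • (w' - w)) i)
      ((J (w + s • (w' - w)) *ᵥ (w' - w)) i) s := fun s =>
    hasDerivAt_pi.mp (hasDerivAt_comp_add_smul (hF.differentiable one_ne_zero) hJ w _ s) i
  have hcont : Continuous fun s : ℝ => (J (w + s • (w' - w)) *ᵥ (w' - w)) i :=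
    (continuous_apply i).comp (hJc.matrix_mulVec continuous_const)
  rw [intervalIntegral.integral_eq_sub_of_hasDerivAt (fun s _ => hderiv s)
    (hcont.intervalIntegrable 0 1)]
  simp

end Jacobian

/-- One-step error identity for the full-batch Gram-Gauss-Newton update:
if `w' = w − J(w)ᵀ G⁻¹ (F(w) − y)` with `G = J(w)J(w)ᵀ` invertible, then
`F(w') − y = (J(w) − J̄) J(w)ᵀ G⁻¹ (F(w) − y)` where `J̄ = ∫₀¹ J(w + s(w'−w)) ds`,
and hence `‖F(w') − y‖₂ ≤ ‖J(w) − J̄‖₂ ‖J(w)ᵀ‖₂ ‖G⁻¹‖₂ ‖F(w) − y‖₂`. -/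
theorem ggn_one_step_error_identity {p n : ℕ}
    (F : (Fin p → ℝ) → Fin n → ℝ) (hF : ContDiff ℝ 1 F)
    (J : (Fin p → ℝ) → Matrix (Fin n) (Fin p) ℝ)
    (hJ : ∀ (w : Fin p → ℝ) (v : Fin p → ℝ), fderiv ℝ F w v = (J w).mulVec v)
    (y : Fin n → ℝ) (w : Fin p → ℝ)
    (G : Matrix (Fin n) (Fin n) ℝ) (hG : G = J w * (J w)ᵀ)
    (hGunit : IsUnit G)
    (w' : Fin p → ℝ)
    (hw' : w' = w - (J w)ᵀ.mulVec (G⁻¹.mulVec (F w - y)))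
    (Jbar : Matrix (Fin n) (Fin p) ℝ)
    (hJbar : ∀ i j, Jbar i j = ∫ s in (0:ℝ)..1, J (w + s • (w' - w)) i j) :
    F w' - y = (J w - Jbar).mulVec ((J w)ᵀ.mulVec (G⁻¹.mulVec (F w - y))) ∧
    eNorm (F w' - y) ≤
      specNorm (J w - Jbar) * specNorm (J w)ᵀ * specNorm G⁻¹ * eNorm (F w - y) := by
  set r := F w - y with hr
  set u := (J w)ᵀ *ᵥ (G⁻¹ *ᵥ r)
  have hJbar_eq : Jbar = segmentAverage J w w' := ext hJbar
  have hstep : w' - w = -u := by rw [hw']; abel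
  have hJu : J w *ᵥ u = r := by
    subst hG; exact mulVec_transpose_mulVec_inv_mulVec _ hGunit r
  have hid : F w' - y = (J w - Jbar) *ᵥ u := by
    rw [sub_mulVec, hJu, show F w' - y = r + (F w' - F w) by rw [hr]; abel,
      sub_eq_segmentAverage_mulVec hF hJ, ← hJbar_eq, hstep, mulVec_neg, sub_eq_add_neg]
  refine ⟨hid, hid ▸ ?_⟩
  calc eNorm ((J w - Jbar) *ᵥ u)
      ≤ specNorm (J w - Jbar) * eNorm u := eNorm_mulVec_le _ _
    _ ≤ specNorm (J w - Jbar) * (specNorm (J w)ᵀ * (specNorm G⁻¹ * eNorm r)) := by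
        gcongr
        · exact specNorm_nonneg _
        · exact (eNorm_mulVec_le _ _).trans
            (mul_le_mul_of_nonneg_left (eNorm_mulVec_le _ _) (specNorm_nonneg _))
    _ = specNorm (J w - Jbar) * specNorm (J w)ᵀ * specNorm G⁻¹ * eNorm r := by ring
end

section
/- Let F : ℝ^p → ℝⁿ be continuously differentiable with Jacobian J(w) ∈ ℝ^{n×p}, let y ∈ ℝⁿ, and let B ⊆ {1, …, n} be a batch of size b. Write J_B(w) ∈ ℝ^{b×p} for the rows of J(w) indexed by B, F_B(w), y_B for the corresponding subvectors, and assume G_B = J_B(w) J_B(w)^T is invertible. Set w' = w − J_B(w)^T G_B^{-1}(F_B(w) − y_B). Then F(w') − y = ( I_n − J̄ J_B(w)^T G̃ ) (F(w) − y), where J̄ = ∫₀¹ J(w + s(w'−w)) ds and G̃ ∈ ℝ^{b×n} is the zero-padded matrix whose columns indexed by B form G_B^{-1} and whose other columns are zero (so that G̃ (F(w) − y) = G_B^{-1}(F_B(w) − y_B)). -/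
/-!
By the fundamental theorem of calculus along the segment from `w` to `w'`,
`F w' - F w = J̄ (w' - w)`, and the Gram-Gauss-Newton step is `w' - w = -J_Bᵀ G̃ (F w - y)`,
because `G̃ (F w - y) = G_B⁻¹ (F_B w - y_B)`. Substituting into
`F w' - y = (F w - y) + (F w' - F w)` gives the identity.
-/

open Matrix

theorem of_ite_eq_one_zero_mulVec {R l n : Type*} [NonAssocSemiring R] [Fintype n] [DecidableEq n]
    (ι : l → n) (r : n → R) :
    (of fun a j => if ι a = j then (1 : R) else 0) *ᵥ r = fun a => r (ι a) := by
  ext a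
  simp [mulVec, dotProduct]

theorem intervalIntegral_mulVec_apply {k m : Type*} [Fintype m] {M : ℝ → Matrix k m ℝ} {a b : ℝ}
    (hM : ∀ i j, IntervalIntegrable (fun s => M s i j) MeasureTheory.volume a b) (v : m → ℝ)
    (i : k) : ∫ s in a..b, (M s *ᵥ v) i = ((of fun i j => ∫ s in a..b, M s i j) *ᵥ v) i := by
  simp only [mulVec, dotProduct, of_apply]
  rw [intervalIntegral.integral_finsetSum fun j _ => (hM i j).mul_const (v j)]
  simp only [intervalIntegral.integral_mul_const]

section Jacobian

variable {m k : Type*} [Fintype m] [DecidableEq m]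
  {F : (m → ℝ) → k → ℝ} {J : (m → ℝ) → Matrix k m ℝ}

theorem jacobian_apply_eq_fderiv (hJ : ∀ u v, fderiv ℝ F u v = J u *ᵥ v) (u : m → ℝ) (i : k)
    (j : m) : J u i j = fderiv ℝ F u (Pi.single j 1) i := by
  rw [hJ, mulVec_single_one, col_apply]

variable [Fintype k]

theorem continuous_jacobian_apply (hF : ContDiff ℝ 1 F) (hJ : ∀ u v, fderiv ℝ F u v = J u *ᵥ v)
    (i : k) (j : m) : Continuous fun u => J u i j := by
  simp only [jacobian_apply_eq_fderiv hJ]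
  exact (continuous_apply i).comp ((hF.continuous_fderiv one_ne_zero).clm_apply continuous_const)

theorem apply_add_sub_apply_eq_integral_jacobian_mulVec (hF : ContDiff ℝ 1 F)
    (hJ : ∀ u v, fderiv ℝ F u v = J u *ᵥ v) (w v : m → ℝ) (i : k) :
    F (w + v) i - F w i = ∫ s in (0 : ℝ)..1, (J (w + s • v) *ᵥ v) i := by
  have hpath : ∀ s : ℝ, HasDerivAt (fun t : ℝ => w + t • v) v s := fun s => by
    simpa using ((hasDerivAt_id s).smul_const v).const_add w
  have hderiv : ∀ s ∈ Set.uIcc (0 : ℝ) 1,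
      HasDerivAt (fun t : ℝ => F (w + t • v) i) ((J (w + s • v) *ᵥ v) i) s := fun s _ => by
    have hFs := ((hF.differentiable one_ne_zero) (w + s • v)).hasFDerivAt.comp_hasDerivAt s
      (hpath s)
    rw [← hJ]
    exact hasDerivAt_pi.mp hFs i
  have hcont : Continuous fun s : ℝ => (J (w + s • v) *ᵥ v) i := by
    simp only [mulVec, dotProduct]
    exact continuous_finsetSum _ fun j _ =>
      ((continuous_jacobian_apply hF hJ i j).comp (by fun_prop)).mul continuous_const
  simpa using (intervalIntegral.integral_eq_sub_of_hasDerivAt hderiv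
    (hcont.intervalIntegrable 0 1)).symm

theorem sub_eq_integral_jacobian_mulVec (hF : ContDiff ℝ 1 F)
    (hJ : ∀ u v, fderiv ℝ F u v = J u *ᵥ v) (w v : m → ℝ) :
    F (w + v) - F w = (of fun i j => ∫ s in (0 : ℝ)..1, J (w + s • v) i j) *ᵥ v := by
  ext i
  rw [Pi.sub_apply, apply_add_sub_apply_eq_integral_jacobian_mulVec hF hJ]
  exact intervalIntegral_mulVec_apply (fun i j =>
    ((continuous_jacobian_apply hF hJ i j).comp
      (continuous_const.add (continuous_id.smul continuous_const))).intervalIntegrable 0 1) v i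

end Jacobian

theorem minibatch_ggn_one_step_error_identity_general {p n b : ℕ}
    (F : (Fin p → ℝ) → Fin n → ℝ) (hF : ContDiff ℝ 1 F)
    (J : (Fin p → ℝ) → Matrix (Fin n) (Fin p) ℝ)
    (hJ : ∀ (w : Fin p → ℝ) (v : Fin p → ℝ), fderiv ℝ F w v = (J w).mulVec v)
    (y : Fin n → ℝ)
    (ι : Fin b ↪ Fin n)
    (w : Fin p → ℝ)
    (JB : Matrix (Fin b) (Fin p) ℝ)
    (GB : Matrix (Fin b) (Fin b) ℝ)
    (w' : Fin p → ℝ)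
    (hw' : w' = w - JBᵀ.mulVec (GB⁻¹.mulVec ((fun l => F w (ι l)) - fun l => y (ι l))))
    (Jbar : Matrix (Fin n) (Fin p) ℝ)
    (hJbar : ∀ i j, Jbar i j = ∫ s in (0:ℝ)..1, J (w + s • (w' - w)) i j)
    (E : Matrix (Fin b) (Fin n) ℝ)
    (hE : E = Matrix.of fun l j => if ι l = j then 1 else 0)
    (Gtilde : Matrix (Fin b) (Fin n) ℝ) (hGtilde : Gtilde = GB⁻¹ * E) :
    F w' - y = (1 - Jbar * JBᵀ * Gtilde).mulVec (F w - y) := by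
  have hmean : F w' - F w = Jbar *ᵥ (w' - w) := by
    have h := sub_eq_integral_jacobian_mulVec hF hJ w (w' - w)
    rwa [add_sub_cancel, ← Matrix.ext_iff.mp hJbar] at h
  have hresidual : Gtilde *ᵥ (F w - y) = GB⁻¹ *ᵥ ((fun l => F w (ι l)) - fun l => y (ι l)) := by
    rw [hGtilde, hE, ← mulVec_mulVec, of_ite_eq_one_zero_mulVec]
    rfl
  calc F w' - y = (F w - y) + Jbar *ᵥ (w' - w) := by rw [← hmean]; abel
    _ = (F w - y) - (Jbar * JBᵀ * Gtilde) *ᵥ (F w - y) := by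
      rw [← mulVec_mulVec, ← mulVec_mulVec, hresidual, hw', sub_sub_cancel_left, mulVec_neg,
        ← sub_eq_add_neg]
    _ = (1 - Jbar * JBᵀ * Gtilde) *ᵥ (F w - y) := by rw [sub_mulVec, one_mulVec]

/-- One-step error identity for the mini-batch Gram-Gauss-Newton update:
if `w' = w − J_B(w)ᵀ G_B⁻¹ (F_B(w) − y_B)` with `G_B = J_B(w)J_B(w)ᵀ` invertible, then
`F(w') − y = (I − J̄ J_B(w)ᵀ G̃)(F(w) − y)`, where `J̄ = ∫₀¹ J(w + s(w'−w)) ds` and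
`G̃ ∈ ℝ^{b×n}` has the columns indexed by the batch equal to `G_B⁻¹` and zero elsewhere. -/
theorem minibatch_ggn_one_step_error_identity {p n b : ℕ}
    (F : (Fin p → ℝ) → Fin n → ℝ) (hF : ContDiff ℝ 1 F)
    (J : (Fin p → ℝ) → Matrix (Fin n) (Fin p) ℝ)
    (hJ : ∀ (w : Fin p → ℝ) (v : Fin p → ℝ), fderiv ℝ F w v = (J w).mulVec v)
    (y : Fin n → ℝ)
    (ι : Fin b ↪ Fin n)
    (w : Fin p → ℝ)
    (JB : Matrix (Fin b) (Fin p) ℝ) (hJB : JB = (J w).submatrix ι id)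
    (GB : Matrix (Fin b) (Fin b) ℝ) (hGB : GB = JB * JBᵀ)
    (hGBunit : IsUnit GB)
    (w' : Fin p → ℝ)
    (hw' : w' = w - JBᵀ.mulVec (GB⁻¹.mulVec ((fun l => F w (ι l)) - fun l => y (ι l))))
    (Jbar : Matrix (Fin n) (Fin p) ℝ)
    (hJbar : ∀ i j, Jbar i j = ∫ s in (0:ℝ)..1, J (w + s • (w' - w)) i j)
    (E : Matrix (Fin b) (Fin n) ℝ)
    (hE : E = Matrix.of fun l j => if ι l = j then 1 else 0)
    (Gtilde : Matrix (Fin b) (Fin n) ℝ) (hGtilde : Gtilde = GB⁻¹ * E) :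
    F w' - y = (1 - Jbar * JBᵀ * Gtilde).mulVec (F w - y) :=
  minibatch_ggn_one_step_error_identity_general F hF J hJ y ι w JB GB w' hw' Jbar hJbar E hE Gtilde
    hGtilde
end

section
/- Let A ∈ ℝ^{n×n} be diagonalizable, A = P^{-1} Q P with Q diagonal, and let ρ = max_i |Q_{ii}| be the spectral radius of A and μ = ‖P‖₂ ‖P^{-1}‖₂. If matrices A_1, …, A_T ∈ ℝ^{n×n} satisfy ‖A_t − A‖₂ ≤ δ for all t ∈ {1, …, T}, then ‖A_T A_{T−1} ⋯ A_1‖₂ ≤ μ (ρ + μ δ)^T. -/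
/-!
Conjugation by `P` turns each `A_t` into `Q + P (A_t - A) P⁻¹`, whose norm is at most
`ρ + μ δ`, and the conjugated product telescopes to `P (A_T ⋯ A_1) P⁻¹`. Submultiplicativity
of the norm then gives the bound; the argument works verbatim in any seminormed ring.
-/

open Matrix

theorem Units.list_prod_map_conj {M : Type*} [Monoid M] (u : Mˣ) (l : List M) :
    (l.map fun x => (↑u⁻¹ : M) * x * u).prod = ↑u⁻¹ * l.prod * u := by
  induction l with
  | nil => simp
  | cons x l ih =>
    rw [List.map_cons, List.prod_cons, ih, List.prod_cons]
    simp only [mul_assoc, Units.mul_inv_cancel_left]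

section SeminormedRing

variable {R : Type*} [SeminormedRing R]

theorem norm_mul_list_prod_le {c : ℝ} (a : R) (l : List R) (h : ∀ x ∈ l, ‖x‖ ≤ c) :
    ‖a * l.prod‖ ≤ ‖a‖ * c ^ l.length := by
  induction l generalizing a with
  | nil => simp
  | cons x l ih =>
    have hx : ‖x‖ ≤ c := h x List.mem_cons_self
    have hc : 0 ≤ c ^ l.length := pow_nonneg ((norm_nonneg x).trans hx) _
    calc ‖a * (x :: l).prod‖ = ‖a * x * l.prod‖ := by rw [List.prod_cons, mul_assoc]
      _ ≤ ‖a * x‖ * c ^ l.length := ih (a * x) fun y hy => h y (List.mem_cons_of_mem x hy)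
      _ ≤ ‖a‖ * ‖x‖ * c ^ l.length := mul_le_mul_of_nonneg_right (norm_mul_le a x) hc
      _ ≤ ‖a‖ * c * c ^ l.length :=
        mul_le_mul_of_nonneg_right (mul_le_mul_of_nonneg_left hx (norm_nonneg a)) hc
      _ = ‖a‖ * c ^ (x :: l).length := by rw [List.length_cons, pow_succ', mul_assoc]

theorem norm_list_prod_le_of_near_units_conj (u : Rˣ) {q : R} {ρ δ : ℝ} (hq : ‖q‖ ≤ ρ)
    (l : List R) (hl : ∀ x ∈ l, ‖x - (↑u⁻¹ : R) * q * u‖ ≤ δ) :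
    ‖l.prod‖ ≤ ‖(u : R)‖ * ‖(↑u⁻¹ : R)‖ * (ρ + ‖(u : R)‖ * ‖(↑u⁻¹ : R)‖ * δ) ^ l.length := by
  set m := l.map fun x => (u : R) * x * ↑u⁻¹
  have hprod : l.prod = ↑u⁻¹ * m.prod * u := by
    rw [← Units.list_prod_map_conj, List.map_map]
    simp [Function.comp_def, mul_assoc]
  have hm : ∀ y ∈ m, ‖y‖ ≤ ρ + ‖(u : R)‖ * ‖(↑u⁻¹ : R)‖ * δ := by
    simp only [m, List.mem_map]
    rintro _ ⟨x, hx, rfl⟩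
    have hsplit : (u : R) * x * ↑u⁻¹ = q + u * (x - ↑u⁻¹ * q * u) * ↑u⁻¹ := by
      simp [mul_sub, sub_mul, mul_assoc]
    calc ‖(u : R) * x * ↑u⁻¹‖
        ≤ ‖q‖ + ‖(u : R)‖ * ‖x - ↑u⁻¹ * q * u‖ * ‖(↑u⁻¹ : R)‖ := by
          rw [hsplit]; exact (norm_add_le _ _).trans (add_le_add_right norm_mul₃_le _)
      _ = ‖q‖ + ‖(u : R)‖ * ‖(↑u⁻¹ : R)‖ * ‖x - ↑u⁻¹ * q * u‖ := by ring
      _ ≤ ρ + ‖(u : R)‖ * ‖(↑u⁻¹ : R)‖ * δ := by gcongr; exact hl x hx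
  calc ‖l.prod‖ ≤ ‖(↑u⁻¹ : R) * m.prod‖ * ‖(u : R)‖ := by rw [hprod]; exact norm_mul_le _ _
    _ ≤ ‖(↑u⁻¹ : R)‖ * (ρ + ‖(u : R)‖ * ‖(↑u⁻¹ : R)‖ * δ) ^ m.length * ‖(u : R)‖ := by
        gcongr; exact norm_mul_list_prod_le _ m hm
    _ = _ := by rw [List.length_map]; ring

end SeminormedRing

open scoped Matrix.Norms.L2Operator

theorem specNorm_eq_norm {m n : Type*} [Fintype m] [Fintype n] [DecidableEq n]
    (A : Matrix m n ℝ) : specNorm A = ‖A‖ := rfl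

theorem specNorm_of_isEmpty {n : Type*} [Fintype n] [DecidableEq n] [IsEmpty n]
    (A : Matrix n n ℝ) : specNorm A = 0 := by
  rw [specNorm_eq_norm, Subsingleton.elim A 0, norm_zero]

theorem Matrix.IsDiag.l2_opNorm_le {n : Type*} [Fintype n] [DecidableEq n] [Nonempty n]
    {Q : Matrix n n ℝ} (hQ : Q.IsDiag) {ρ : ℝ} (hρ : ∀ i, |Q i i| ≤ ρ) : ‖Q‖ ≤ ρ := by
  rw [← hQ.diagonal_diag, l2_opNorm_diagonal]
  exact (pi_norm_le_iff_of_nonneg ((abs_nonneg _).trans (hρ (Classical.arbitrary n)))).2 hρ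

/-- If `A = P⁻¹ Q P` with `Q` diagonal, `ρ` bounding the moduli of the
diagonal entries of `Q` (the spectral radius of `A`), `μ = ‖P‖₂‖P⁻¹‖₂`, and
`‖A_t − A‖₂ ≤ δ` for `t = 1, …, T`, then `‖A_T ⋯ A_1‖₂ ≤ μ (ρ + μ δ)^T`. -/
theorem perturbed_power_bound {n T : ℕ}
    (A P Q : Matrix (Fin n) (Fin n) ℝ)
    (hP : IsUnit P) (hQ : Q.IsDiag) (hA : A = P⁻¹ * Q * P)
    (ρ μ δ : ℝ) (hρ : ∀ i, |Q i i| ≤ ρ)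
    (hμ : μ = specNorm P * specNorm P⁻¹)
    (A' : Fin T → Matrix (Fin n) (Fin n) ℝ)
    (hA' : ∀ t, specNorm (A' t - A) ≤ δ) :
    specNorm ((List.ofFn A').reverse.prod) ≤ μ * (ρ + μ * δ) ^ T := by
  rcases isEmpty_or_nonempty (Fin n) with _ | _
  · simp [hμ, specNorm_of_isEmpty]
  lift P to (Matrix (Fin n) (Fin n) ℝ)ˣ using hP
  rw [← coe_units_inv] at hA hμ
  subst hA hμ
  have key := norm_list_prod_le_of_near_units_conj P (δ := δ) (hQ.l2_opNorm_le hρ)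
    (List.ofFn A').reverse ?_
  · rwa [List.length_reverse, List.length_ofFn] at key
  simp only [List.mem_reverse, List.mem_ofFn]
  rintro _ ⟨t, rfl⟩
  exact hA' t
end
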